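/- Let π0 = (01234), π1 = (01432), π2 = (03241), π3 = (04231), cyclic permutations of {0,1,2,3,4}. Then: (i) the only antiroute of size 1 from π0 to π1 is {(01)}, and likewise the only antiroute of size 1 from π2 to π3 is {(01)}; (ii) the only antiroute of size 1 from π1 to π2 is {(23)}, and likewise the only antiroute of size 1 from π0 to π3 is {(23)}; (iii) there are exactly two antiroutes of size 2 from π0 to π2, namely {(04),(14)} and {(24),(34)}, and these same two sets are also exactly the antiroutes of size 2 from π1 to π3. -/

import Mathlib

/-- The cyclic permutation `(a b c d e)` of `Fin 5`, sending `a ↦ b ↦ c ↦ d ↦ e ↦ a`. -/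
def cyc5 (a b c d e : Fin 5) : Equiv.Perm (Fin 5) :=
  Equiv.swap a e * Equiv.swap a d * Equiv.swap a c * Equiv.swap a b

/-- A permutation is *cyclic* if it consists of a single cycle through all elements. -/
def IsCyclicPerm {α : Type*} [Fintype α] [DecidableEq α] (σ : Equiv.Perm α) : Prop :=
  σ.IsCycle ∧ σ.support = Finset.univ

/-- `RouteList γ L κ` holds when successively applying the transpositions in the list `L`
(each, at the moment it is applied, being a swap of two symbols adjacent in the current
cyclic permutation, and acting by conjugation, i.e. by interchanging the two symbols)
transforms `γ` into `κ`. -/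
def RouteList {α : Type*} [DecidableEq α] :
    Equiv.Perm α → List (Equiv.Perm α) → Equiv.Perm α → Prop
  | γ, [], κ => γ = κ
  | γ, τ :: L, κ => ∃ x y, x ≠ y ∧ τ = Equiv.swap x y ∧ (γ x = y ∨ γ y = x) ∧
      RouteList (τ * γ * τ) L κ

/-- `P` is a *route* from `γ` to `κ`: a set of pairwise distinct transpositions that can be
ordered into a sequence whose successive application transforms `γ` into `κ`. -/
def IsRoute {α : Type*} [Fintype α] [DecidableEq α] (γ κ : Equiv.Perm α)
    (P : Finset (Equiv.Perm α)) : Prop :=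
  ∃ L : List (Equiv.Perm α), L.Nodup ∧ L.toFinset = P ∧ RouteList γ L κ

/-- `P` is an *antiroute* from `γ` to `κ`: a route from `γ` to the reverse `κ⁻¹` of `κ`. -/
def IsAntiroute {α : Type*} [Fintype α] [DecidableEq α] (γ κ : Equiv.Perm α)
    (P : Finset (Equiv.Perm α)) : Prop :=
  IsRoute γ κ⁻¹ P

/-! Routes of size one or two are lists of one or two adjacent swaps, so every claim reduces to a
finite check over the at most `5 ^ 4` choices of swapped symbols, which `decide` carries out. -/

instance RouteList.decidable {α : Type*} [Fintype α] [DecidableEq α] :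
    ∀ (γ : Equiv.Perm α) (L : List (Equiv.Perm α)) (κ : Equiv.Perm α),
      Decidable (RouteList γ L κ)
  | γ, [], κ => inferInstanceAs (Decidable (γ = κ))
  | γ, τ :: L, κ =>
    haveI := RouteList.decidable (τ * γ * τ) L κ
    inferInstanceAs (Decidable (∃ x y, x ≠ y ∧ τ = Equiv.swap x y ∧
      (γ x = y ∨ γ y = x) ∧ RouteList (τ * γ * τ) L κ))

namespace IsRoute

variable {α : Type*} [Fintype α] [DecidableEq α] {γ κ : Equiv.Perm α}
  {P : Finset (Equiv.Perm α)}

theorem elim_card_eq_one (p : Finset (Equiv.Perm α) → Prop)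
    (step : ∀ x y, x ≠ y → (γ x = y ∨ γ y = x) →
      Equiv.swap x y * γ * Equiv.swap x y = κ → p {Equiv.swap x y})
    (hP : IsRoute γ κ P) (hc : P.card = 1) : p P := by
  obtain ⟨L, hL, rfl, hroute⟩ := hP
  have hlen : L.length = 1 := (List.toFinset_card_of_nodup hL).symm.trans hc
  obtain ⟨τ, rfl⟩ := List.length_eq_one_iff.mp hlen
  obtain ⟨x, y, hxy, rfl, hadj, rfl⟩ := hroute
  simpa using step x y hxy hadj rfl

theorem elim_card_eq_two (p : Finset (Equiv.Perm α) → Prop)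
    (step : ∀ x y x' y', x ≠ y → x' ≠ y' → (γ x = y ∨ γ y = x) →
      (let γ' := Equiv.swap x y * γ * Equiv.swap x y
       (γ' x' = y' ∨ γ' y' = x') ∧ Equiv.swap x' y' * γ' * Equiv.swap x' y' = κ) →
      p {Equiv.swap x y, Equiv.swap x' y'})
    (hP : IsRoute γ κ P) (hc : P.card = 2) : p P := by
  obtain ⟨L, hL, rfl, hroute⟩ := hP
  have hlen : L.length = 2 := (List.toFinset_card_of_nodup hL).symm.trans hc
  obtain ⟨τ, τ', rfl⟩ := List.length_eq_two.mp hlen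
  obtain ⟨x, y, hxy, rfl, hadj, x', y', hxy', rfl, hadj', rfl⟩ := hroute
  simpa using step x y x' y' hxy hxy' hadj ⟨hadj', rfl⟩

end IsRoute

/-- For `π0 = (01234)`, `π1 = (01432)`, `π2 = (03241)`, `π3 = (04231)`:
(i) the only antiroute of size 1 from `π0` to `π1` is `{(01)}`, and likewise the only
antiroute of size 1 from `π2` to `π3` is `{(01)}`;
(ii) the only antiroute of size 1 from `π1` to `π2` is `{(23)}`, and likewise the only
antiroute of size 1 from `π0` to `π3` is `{(23)}`;
(iii) the antiroutes of size 2 from `π0` to `π2` are exactly `{(04),(14)}` and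
`{(24),(34)}`, and these same two sets are also exactly the antiroutes of size 2 from
`π1` to `π3`. -/
theorem antiroutes_cycle_configuration
    (π0 π1 π2 π3 : Equiv.Perm (Fin 5))
    (h0 : π0 = cyc5 0 1 2 3 4) (h1 : π1 = cyc5 0 1 4 3 2)
    (h2 : π2 = cyc5 0 3 2 4 1) (h3 : π3 = cyc5 0 4 2 3 1) :
    (IsAntiroute π0 π1 {Equiv.swap 0 1} ∧
      ∀ P, IsAntiroute π0 π1 P → P.card = 1 → P = {Equiv.swap 0 1}) ∧
    (IsAntiroute π2 π3 {Equiv.swap 0 1} ∧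
      ∀ P, IsAntiroute π2 π3 P → P.card = 1 → P = {Equiv.swap 0 1}) ∧
    (IsAntiroute π1 π2 {Equiv.swap 2 3} ∧
      ∀ P, IsAntiroute π1 π2 P → P.card = 1 → P = {Equiv.swap 2 3}) ∧
    (IsAntiroute π0 π3 {Equiv.swap 2 3} ∧
      ∀ P, IsAntiroute π0 π3 P → P.card = 1 → P = {Equiv.swap 2 3}) ∧
    (IsAntiroute π0 π2 {Equiv.swap 0 4, Equiv.swap 1 4} ∧
      IsAntiroute π0 π2 {Equiv.swap 2 4, Equiv.swap 3 4} ∧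
      (∀ P, IsAntiroute π0 π2 P → P.card = 2 →
        (P = {Equiv.swap 0 4, Equiv.swap 1 4} ∨ P = {Equiv.swap 2 4, Equiv.swap 3 4}))) ∧
    (IsAntiroute π1 π3 {Equiv.swap 0 4, Equiv.swap 1 4} ∧
      IsAntiroute π1 π3 {Equiv.swap 2 4, Equiv.swap 3 4} ∧
      (∀ P, IsAntiroute π1 π3 P → P.card = 2 →
        (P = {Equiv.swap 0 4, Equiv.swap 1 4} ∨ P = {Equiv.swap 2 4, Equiv.swap 3 4}))) := by
  subst h0 h1 h2 h3
  refine ⟨⟨⟨[Equiv.swap 0 1], by decide, by decide, by decide⟩,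
      fun P hP hc => hP.elim_card_eq_one (· = _) (by decide) hc⟩,
    ⟨⟨[Equiv.swap 0 1], by decide, by decide, by decide⟩,
      fun P hP hc => hP.elim_card_eq_one (· = _) (by decide) hc⟩,
    ⟨⟨[Equiv.swap 2 3], by decide, by decide, by decide⟩,
      fun P hP hc => hP.elim_card_eq_one (· = _) (by decide) hc⟩,
    ⟨⟨[Equiv.swap 2 3], by decide, by decide, by decide⟩,
      fun P hP hc => hP.elim_card_eq_one (· = _) (by decide) hc⟩,
    ⟨⟨[Equiv.swap 0 4, Equiv.swap 1 4], by decide, by decide, by decide⟩,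
      ⟨[Equiv.swap 3 4, Equiv.swap 2 4], by decide, by decide, by decide⟩,
      fun P hP hc => hP.elim_card_eq_two (fun Q => Q = _ ∨ Q = _) (by decide) hc⟩,
    ⟨⟨[Equiv.swap 1 4, Equiv.swap 0 4], by decide, by decide, by decide⟩,
      ⟨[Equiv.swap 3 4, Equiv.swap 2 4], by decide, by decide, by decide⟩,
      fun P hP hc => hP.elim_card_eq_two (fun Q => Q = _ ∨ Q = _) (by decide) hc⟩⟩
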